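/- Let B be a nonsingular square matrix over F_q[X] whose rows correspond to a basis of the module M_{s,ℓ}, with B·W_ℓ in weak Popov form, and suppose the permissible condition E(s,ℓ,τ) > 0 holds. Then the row of B of minimal (1,k−1)-weighted degree corresponds to a nonzero polynomial Q ∈ M_{s,ℓ} with weighted degree strictly less than s(n−τ). -/

import Mathlib

open Polynomial

/-- The shifted polynomial Q(X+a, Y+b), where `Q : F[X][Y]` (outer variable `Y`,
inner variable `X`). -/
noncomputable def shiftXY {F : Type*} [Field F] (Q : Polynomial (Polynomial F)) (a b : F) :
    Polynomial (Polynomial F) :=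
  (Q.map ((aeval (X + C a : Polynomial F)).toRingHom : Polynomial F →+* Polynomial F)).comp
    (X + C (C b))

/-- `Q` vanishes with multiplicity at least `s` at the point `(a, b)`:
`Q(X+a, Y+b)` has no monomial `X^i Y^j` with `i + j < s`. -/
def HasMultAt {F : Type*} [Field F] (Q : Polynomial (Polynomial F)) (a b : F) (s : ℕ) : Prop :=
  ∀ i j : ℕ, i + j < s → ((shiftXY Q a b).coeff j).coeff i = 0

/-- The set (an `F[X]`-module) of bivariate polynomials of `Y`-degree at most `ℓ`
vanishing with multiplicity at least `s` at each point `(α i, r' i)`. -/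
def InterpSet {F : Type*} [Field F] {n : ℕ} (α r' : Fin n → F) (s ℓ : ℕ) :
    Set (Polynomial (Polynomial F)) :=
  {Q | Q.natDegree ≤ ℓ ∧ ∀ i, HasMultAt Q (α i) (r' i) s}

/-- The family `b` is a basis of the `F[X]`-module `M_{s,ℓ} = InterpSet α r' s ℓ`:
it is linearly independent over `F[X]` and its `F[X]`-span is exactly `M_{s,ℓ}`. -/
def IsBasisOfInterp {F : Type*} [Field F] {n : ℕ} (α r' : Fin n → F) (s ℓ : ℕ)
    {ι : Type*} (b : ι → Polynomial (Polynomial F)) : Prop :=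
  LinearIndependent (Polynomial F) b ∧
    (Submodule.span (Polynomial F) (Set.range b) : Set (Polynomial (Polynomial F))) =
      InterpSet α r' s ℓ

open scoped Classical

/-- The degree of a vector over `F[X]`: the maximum of the degrees of its entries
(`⊥` for the zero vector). -/
noncomputable def vecDeg {F : Type*} [Field F] {m : ℕ} (v : Fin m → Polynomial F) : WithBot ℕ :=
  Finset.univ.sup fun j => (v j).degree

/-- The leading position of a vector over `F[X]`: the largest index attaining the
vector's degree. -/
noncomputable def leadPos {F : Type*} [Field F] {m : ℕ} (v : Fin m → Polynomial F) : ℕ :=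
  (Finset.univ.filter fun j : Fin m => (v j).degree = vecDeg v).sup fun j => (j : ℕ)

/-- A square matrix over `F[X]` is in weak Popov form if the leading positions of
its rows are pairwise distinct. -/
noncomputable def WeakPopov {F : Type*} [Field F] {m : ℕ}
    (V : Matrix (Fin m) (Fin m) (Polynomial F)) : Prop :=
  Function.Injective fun i => leadPos (V i)

/-- The degree of a matrix over `F[X]`: the sum of its row degrees (in `WithBot ℕ`). -/
noncomputable def matDeg {F : Type*} [Field F] {m : ℕ}
    (V : Matrix (Fin m) (Fin m) (Polynomial F)) : WithBot ℕ :=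
  ∑ i, vecDeg (V i)

/-- The degree of a vector over `F[X]`, as a natural number (via `natDegree`). -/
def vecDegNat {F : Type*} [Field F] {m : ℕ} (v : Fin m → Polynomial F) : ℕ :=
  Finset.univ.sup fun j => (v j).natDegree

/-- The degree of a matrix over `F[X]` as a natural number: the sum of its row degrees. -/
def matDegNat {F : Type*} [Field F] {m : ℕ}
    (V : Matrix (Fin m) (Fin m) (Polynomial F)) : ℕ :=
  ∑ i, vecDegNat (V i)

/-- The diagonal weight matrix W_ℓ = diag(1, X^{k−1}, …, X^{ℓ(k−1)}). -/
noncomputable def Wmat (F : Type*) [Field F] (k ℓ : ℕ) :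
    Matrix (Fin (ℓ + 1)) (Fin (ℓ + 1)) (Polynomial F) :=
  Matrix.diagonal fun i => X ^ ((i : ℕ) * (k - 1))

/-- The (1, k−1)-weighted degree of a bivariate polynomial `Q : F[X][Y]`:
the maximum of i + (k−1)·j over monomials X^i Y^j occurring in Q. -/
noncomputable def wdeg {F : Type*} [Field F] (k : ℕ) (Q : Polynomial (Polynomial F)) : ℕ :=
  Q.support.sup fun j => (Q.coeff j).natDegree + (k - 1) * j

/-- Identify a row (b_0, …, b_ℓ) over F[X] with the bivariate polynomial Σ_t b_t(X) Y^t. -/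
noncomputable def rowToPoly {F : Type*} [Field F] {ℓ : ℕ} (b : Fin (ℓ + 1) → Polynomial F) :
    Polynomial (Polynomial F) :=
  ∑ t, C (b t) * X ^ (t : ℕ)

/-!
Writing `W = W_ℓ`, the row `v ᵥ* W` has degree equal to the `(1, k−1)`-weighted degree of the
polynomial `∑ v_t Y^t`, so weighted degrees of `F[X]`-combinations `∑ c_i (row i of B)` are degrees
of `c ᵥ* (B W)`. Because `B W` is in weak Popov form, the predictable degree property
`deg (c ᵥ* B W) = max_i (deg c_i + deg (row i of B W))` holds: no cancellation occurs. Hence every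
nonzero `Q ∈ M_{s,ℓ}` has weighted degree at least that of some row of `B`, so the row of minimal
weighted degree is minimal in all of `M_{s,ℓ}`.

Conversely, the polynomials of `Y`-degree `≤ ℓ` with weighted degree `< A = s(n−τ)` form an
`F`-space of dimension `∑_{j ≤ ℓ} (A − j(k−1)) ≥ (ℓ+1)A − binom(ℓ+1,2)(k−1)`, while vanishing to
order `s` at `n` points imposes `n · binom(s+1,2)` linear conditions. `E(s,ℓ,τ) > 0` says that there
are more unknowns than conditions, so some nonzero such polynomial lies in `M_{s,ℓ}`.
-/

section WeakPopov

open Matrix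

variable {F : Type*} [Field F] {m : ℕ}

lemma degree_le_vecDeg (v : Fin m → Polynomial F) (j : Fin m) : (v j).degree ≤ vecDeg v :=
  Finset.le_sup (f := fun j => (v j).degree) (Finset.mem_univ j)

lemma degree_lt_vecDeg_of_leadPos_lt {v : Fin m → Polynomial F} {j : Fin m}
    (hj : leadPos v < j) : (v j).degree < vecDeg v := by
  refine (degree_le_vecDeg v j).lt_of_ne fun h => hj.not_ge ?_
  exact Finset.le_sup (f := fun j : Fin m => (j : ℕ)) (by simp [h])

lemma exists_leadPos_degree_eq_vecDeg [NeZero m] (v : Fin m → Polynomial F) :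
    ∃ p : Fin m, (p : ℕ) = leadPos v ∧ (v p).degree = vecDeg v := by
  obtain ⟨j, -, hj⟩ := Finset.exists_mem_eq_sup Finset.univ Finset.univ_nonempty
    fun j => (v j).degree
  obtain ⟨p, hp, hpsup⟩ := Finset.exists_mem_eq_sup
    (Finset.univ.filter fun j : Fin m => (v j).degree = vecDeg v) ⟨j, by simp [vecDeg, hj]⟩
    fun j : Fin m => (j : ℕ)
  exact ⟨p, hpsup.symm, (Finset.mem_filter.mp hp).2⟩

lemma degree_mul_apply_le_add_vecDeg (a : Polynomial F) (v : Fin m → Polynomial F) (t : Fin m) :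
    (a * v t).degree ≤ a.degree + vecDeg v := by
  rw [degree_mul]
  exact add_le_add le_rfl (degree_le_vecDeg v t)

lemma vecDeg_vecMul_le (c : Fin m → Polynomial F) (M : Matrix (Fin m) (Fin m) (Polynomial F)) :
    vecDeg (c ᵥ* M) ≤ Finset.univ.sup fun i => (c i).degree + vecDeg (M i) :=
  Finset.sup_le fun t _ => vecMul_apply_eq_sum c M t ▸ (degree_sum_le _ _).trans <|
    Finset.sup_mono_fun fun i _ => degree_mul_apply_le_add_vecDeg (c i) (M i) t

/-- The predictable degree property. -/
theorem WeakPopov.vecDeg_vecMul {M : Matrix (Fin m) (Fin m) (Polynomial F)} (hM : WeakPopov M)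
    (c : Fin m → Polynomial F) :
    vecDeg (c ᵥ* M) = Finset.univ.sup fun i => (c i).degree + vecDeg (M i) := by
  refine (vecDeg_vecMul_le c M).antisymm ?_
  set d := Finset.univ.sup fun i => (c i).degree + vecDeg (M i)
  rcases eq_or_ne d ⊥ with hd | hd
  · rw [hd]
    exact bot_le
  have hle : ∀ i, (c i).degree + vecDeg (M i) ≤ d := fun i =>
    Finset.le_sup (f := fun i => (c i).degree + vecDeg (M i)) (Finset.mem_univ i)
  set S := Finset.univ.filter fun i => (c i).degree + vecDeg (M i) = d
  have hS : S.Nonempty := by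
    have hm : (Finset.univ : Finset (Fin m)).Nonempty :=
      Finset.nonempty_iff_ne_empty.mpr fun h => hd (by simp [d, h])
    obtain ⟨i, -, hi⟩ := Finset.exists_mem_eq_sup Finset.univ hm
      fun i => (c i).degree + vecDeg (M i)
    exact ⟨i, by simp [S, d, hi]⟩
  -- Among the rows attaining `d`, take `j` with the rightmost leading position `p`: every other
  -- term of `(c ᵥ* M) p` has degree `< d`, so the term of `j` cannot cancel.
  obtain ⟨j, hjS, hjmax⟩ := Finset.exists_max_image S (fun i => leadPos (M i)) hS
  have hjd : (c j).degree + vecDeg (M j) = d := (Finset.mem_filter.mp hjS).2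
  have : NeZero m := ⟨j.pos.ne'⟩
  obtain ⟨p, hp, hpdeg⟩ := exists_leadPos_degree_eq_vecDeg (M j)
  have hjp : (c j * M j p).degree = d := by rw [degree_mul, hpdeg, hjd]
  have hother : ∀ i ∈ Finset.univ.erase j, (c i * M i p).degree < d := by
    intro i hi
    by_cases hiS : i ∈ S
    · have hid : (c i).degree + vecDeg (M i) = d := (Finset.mem_filter.mp hiS).2
      have hci : (c i).degree ≠ ⊥ := fun h => hd (by rw [← hid, h, WithBot.bot_add])
      have hlt : leadPos (M i) < p := hp ▸ (hjmax i hiS).lt_of_ne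
        fun h => (Finset.mem_erase.mp hi).1 (hM h)
      rw [degree_mul, ← hid]
      exact WithBot.add_lt_add_left hci (degree_lt_vecDeg_of_leadPos_lt hlt)
    · exact (degree_mul_apply_le_add_vecDeg (c i) (M i) p).trans_lt <|
        (hle i).lt_of_ne fun h => hiS (Finset.mem_filter.mpr ⟨Finset.mem_univ i, h⟩)
  have hrest : (∑ i ∈ Finset.univ.erase j, c i * M i p).degree < (c j * M j p).degree :=
    hjp ▸ (degree_sum_le _ _).trans_lt ((Finset.sup_lt_iff (bot_lt_iff_ne_bot.mpr hd)).mpr hother)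
  calc d = ((c ᵥ* M) p).degree := by
        rw [vecMul_apply_eq_sum, ← Finset.add_sum_erase _ _ (Finset.mem_univ j),
          degree_add_eq_left_of_degree_lt hrest, hjp]
    _ ≤ vecDeg (c ᵥ* M) := degree_le_vecDeg _ p

end WeakPopov

section RowToPoly

open Matrix

variable {F : Type*} [Field F] {ℓ : ℕ}

lemma coeff_rowToPoly (v : Fin (ℓ + 1) → Polynomial F) {j : ℕ} (hj : j < ℓ + 1) :
    (rowToPoly v).coeff j = v ⟨j, hj⟩ := by
  simp only [rowToPoly, finsetSum_coeff, coeff_C_mul_X_pow]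
  rw [Fintype.sum_eq_single ⟨j, hj⟩ fun t ht => if_neg fun h => ht (Fin.ext h.symm), if_pos rfl]

lemma coeff_rowToPoly_fin (v : Fin (ℓ + 1) → Polynomial F) (t : Fin (ℓ + 1)) :
    (rowToPoly v).coeff t = v t :=
  coeff_rowToPoly v t.isLt

lemma coeff_rowToPoly_of_lt (v : Fin (ℓ + 1) → Polynomial F) {j : ℕ} (hj : ℓ < j) :
    (rowToPoly v).coeff j = 0 := by
  simp only [rowToPoly, finsetSum_coeff, coeff_C_mul_X_pow]
  exact Finset.sum_eq_zero fun t _ => if_neg (by omega)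

lemma rowToPoly_eq_zero_iff {v : Fin (ℓ + 1) → Polynomial F} : rowToPoly v = 0 ↔ v = 0 :=
  ⟨fun h => funext fun t => by simpa [h] using (coeff_rowToPoly_fin v t).symm,
    fun h => by simp [rowToPoly, h]⟩

lemma rowToPoly_vecMul {m : ℕ} (c : Fin m → Polynomial F)
    (B : Matrix (Fin m) (Fin (ℓ + 1)) (Polynomial F)) :
    rowToPoly (c ᵥ* B) = ∑ i, c i • rowToPoly (B i) := by
  simp only [rowToPoly, vecMul_apply_eq_sum, smul_eq_C_mul, Finset.mul_sum, map_sum,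
    Finset.sum_mul]
  rw [Finset.sum_comm]
  simp only [C_mul, mul_assoc]

lemma vecDeg_vecMul_Wmat (k : ℕ) {v : Fin (ℓ + 1) → Polynomial F} (hv : v ≠ 0) :
    vecDeg (v ᵥ* Wmat F k ℓ) = wdeg k (rowToPoly v) := by
  have hdeg : ∀ t, v t ≠ 0 → (v t * X ^ ((t : ℕ) * (k - 1))).degree =
      WithBot.some (((rowToPoly v).coeff t).natDegree + (k - 1) * t) := by
    intro t ht
    rw [degree_mul_X_pow, degree_eq_natDegree ht, coeff_rowToPoly_fin, mul_comm]
    rfl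
  have hsupp : (rowToPoly v).support.Nonempty :=
    support_nonempty.mpr (mt rowToPoly_eq_zero_iff.mp hv)
  simp only [vecDeg, Wmat, vecMul_diagonal, wdeg]
  rw [Nat.cast_withBot, Finset.coe_sup_of_nonempty hsupp]
  refine le_antisymm (Finset.sup_le fun t _ => ?_) (Finset.sup_le fun j hj => ?_)
  · by_cases ht : v t = 0
    · simp [ht]
    · have ht' : (t : ℕ) ∈ (rowToPoly v).support := by rwa [mem_support_iff, coeff_rowToPoly_fin]
      exact (hdeg t ht).trans_le (Finset.le_sup
        (f := WithBot.some ∘ fun j => ((rowToPoly v).coeff j).natDegree + (k - 1) * j) ht')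
  · have hjℓ : j < ℓ + 1 := by
      by_contra! h
      exact mem_support_iff.mp hj (coeff_rowToPoly_of_lt v h)
    rw [mem_support_iff, coeff_rowToPoly v hjℓ] at hj
    exact (hdeg _ hj).symm.trans_le
      (Finset.le_sup (f := fun t => (v t * X ^ ((t : ℕ) * (k - 1))).degree) (Finset.mem_univ _))

theorem exists_wdeg_rowToPoly_le {k : ℕ} {B : Matrix (Fin (ℓ + 1)) (Fin (ℓ + 1)) (Polynomial F)}
    (hWP : WeakPopov (B * Wmat F k ℓ)) {Q : Polynomial (Polynomial F)}
    (hQ : Q ∈ Submodule.span (Polynomial F) (Set.range fun i => rowToPoly (B i))) (hQ0 : Q ≠ 0) :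
    ∃ i, wdeg k (rowToPoly (B i)) ≤ wdeg k Q := by
  obtain ⟨c, rfl⟩ := (Submodule.mem_span_range_iff_exists_fun (Polynomial F)).mp hQ
  rw [← rowToPoly_vecMul] at hQ0 ⊢
  obtain ⟨i, hci⟩ := Function.ne_iff.mp fun hc : c = 0 => hQ0 (by simp [hc, rowToPoly_eq_zero_iff])
  refine ⟨i, ?_⟩
  by_cases hBi : B i = 0
  · simp [hBi, rowToPoly_eq_zero_iff.mpr, wdeg]
  have hrow : (B * Wmat F k ℓ) i = B i ᵥ* Wmat F k ℓ := rfl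
  have key := hWP.vecDeg_vecMul c
  rw [← vecMul_vecMul, vecDeg_vecMul_Wmat k (mt rowToPoly_eq_zero_iff.mpr hQ0)] at key
  have : (wdeg k (rowToPoly (B i)) : WithBot ℕ) ≤ wdeg k (rowToPoly (c ᵥ* B)) := by
    rw [key, ← vecDeg_vecMul_Wmat k hBi, ← hrow]
    exact (le_add_of_nonneg_left (zero_le_degree_iff.mpr hci)).trans
      (Finset.le_sup (f := fun i => (c i).degree + vecDeg ((B * Wmat F k ℓ) i))
        (Finset.mem_univ i))
  exact_mod_cast this

end RowToPoly

section Interpolation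

variable {F : Type*} [Field F]

lemma shiftXY_add (P Q : Polynomial (Polynomial F)) (a b : F) :
    shiftXY (P + Q) a b = shiftXY P a b + shiftXY Q a b := by
  rw [shiftXY, shiftXY, shiftXY, Polynomial.map_add, add_comp]

lemma shiftXY_smul (c : F) (Q : Polynomial (Polynomial F)) (a b : F) :
    shiftXY (c • Q) a b = c • shiftXY Q a b := by
  rw [shiftXY, shiftXY, ← smul_comp]
  congr 1
  ext j : 1
  simp [coeff_map, coeff_smul]

noncomputable def shiftCoeff (a b : F) (i j : ℕ) : Polynomial (Polynomial F) →ₗ[F] F where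
  toFun Q := ((shiftXY Q a b).coeff j).coeff i
  map_add' P Q := by simp only [shiftXY_add, coeff_add]
  map_smul' c Q := by simp only [shiftXY_smul, coeff_smul, RingHom.id_apply]

-- `⟨j, i⟩ ∈ S` indexes the monomial `X^i Y^j`.
noncomputable def ofCoeffs (S : Finset (Σ _ : ℕ, ℕ)) : (S → F) →ₗ[F] Polynomial (Polynomial F) :=
  Fintype.linearCombination F fun p => monomial p.1.1 (monomial p.1.2 1)

lemma coeff_coeff_ofCoeffs (S : Finset (Σ _ : ℕ, ℕ)) (g : S → F) (j i : ℕ) :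
    ((ofCoeffs S g).coeff j).coeff i = if h : ⟨j, i⟩ ∈ S then g ⟨_, h⟩ else 0 := by
  have hcond : ∀ p : S, (p.1.1 = j ∧ p.1.2 = i) ↔ (p : Σ _ : ℕ, ℕ) = ⟨j, i⟩ := fun p => by
    rw [Sigma.ext_iff, heq_iff_eq]
  simp only [ofCoeffs, Fintype.linearCombination_apply, finsetSum_coeff, coeff_smul,
    coeff_monomial, smul_eq_mul, apply_ite (coeff · i), coeff_zero, mul_ite, mul_one, mul_zero,
    ← ite_and, hcond]
  split_ifs with h
  · rw [Fintype.sum_eq_single ⟨_, h⟩ fun p hp => if_neg (mt Subtype.ext hp), if_pos rfl]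
  · exact Finset.sum_eq_zero fun p _ => if_neg fun (hp : (p : Σ _ : ℕ, ℕ) = ⟨j, i⟩) => h (hp ▸ p.2)

lemma sum_range_id_eq_choose_two (n : ℕ) : ∑ i ∈ Finset.range n, i = n.choose 2 := by
  rw [Finset.sum_range_id, Nat.choose_two_right]

lemma card_sigma_range_sub (s : ℕ) :
    ((Finset.range s).sigma fun i => Finset.range (s - i)).card = (s + 1).choose 2 := by
  rw [Finset.card_sigma, ← sum_range_id_eq_choose_two, Finset.sum_range_succ',
    ← Finset.sum_range_reflect]
  simp only [Finset.card_range, add_zero]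
  refine Finset.sum_congr rfl fun i hi => ?_
  have := Finset.mem_range.mp hi
  omega

lemma wdeg_lt_of_coeff_eq_zero {k A : ℕ} {Q : Polynomial (Polynomial F)} (hQ : Q ≠ 0)
    (h : ∀ j i, A ≤ i + (k - 1) * j → (Q.coeff j).coeff i = 0) : wdeg k Q < A := by
  have hlt : ∀ j ∈ Q.support, (Q.coeff j).natDegree + (k - 1) * j < A := fun j hj => by
    by_contra! hA
    exact leadingCoeff_ne_zero.mpr (mem_support_iff.mp hj) (h j _ hA)
  obtain ⟨j, hj⟩ := support_nonempty.mpr hQ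
  exact (Finset.sup_lt_iff (by have := hlt j hj; simp; omega)).mpr hlt

theorem exists_mem_interpSet_wdeg_lt {n k s ℓ A : ℕ} (α r' : Fin n → F)
    (h : n * (s + 1).choose 2 < ∑ j ∈ Finset.range (ℓ + 1), (A - (k - 1) * j)) :
    ∃ Q, Q ≠ 0 ∧ Q ∈ InterpSet α r' s ℓ ∧ wdeg k Q < A := by
  set S := (Finset.range (ℓ + 1)).sigma fun j => Finset.range (A - (k - 1) * j)
  have hS : ∀ j i, ⟨j, i⟩ ∈ S ↔ j < ℓ + 1 ∧ i < A - (k - 1) * j := by simp [S]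
  set T := (Finset.range s).sigma fun j => Finset.range (s - j)
  let Ψ : Polynomial (Polynomial F) →ₗ[F] (Fin n × T → F) :=
    LinearMap.pi fun x => shiftCoeff (α x.1) (r' x.1) x.2.1.2 x.2.1.1
  have hdim : Module.finrank F (Fin n × T → F) < Module.finrank F (S → F) := by
    rw [Module.finrank_fintype_fun_eq_card, Module.finrank_fintype_fun_eq_card, Fintype.card_prod,
      Fintype.card_fin, Fintype.card_coe, Fintype.card_coe, card_sigma_range_sub, Finset.card_sigma]
    simpa using h
  obtain ⟨g, hg, hg0⟩ := (Submodule.ne_bot_iff _).mp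
    (LinearMap.ker_ne_bot_of_finrank_lt (f := Ψ ∘ₗ ofCoeffs S) hdim)
  have hcoeff := coeff_coeff_ofCoeffs S g
  have hQ : ofCoeffs S g ≠ 0 := fun hQ => hg0 (funext fun p => by
    simpa [hQ] using (hcoeff p.1.1 p.1.2).symm)
  refine ⟨ofCoeffs S g, hQ, ⟨?_, fun x i j hij => ?_⟩, ?_⟩
  · refine natDegree_le_iff_coeff_eq_zero.mpr fun j hj => Polynomial.ext fun i => ?_
    rw [hcoeff, dif_neg (by rw [hS]; omega), coeff_zero]
  · have hx : (⟨j, i⟩ : Σ _ : ℕ, ℕ) ∈ T := by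
      simp only [T, Finset.mem_sigma, Finset.mem_range]
      omega
    simpa [Ψ, shiftCoeff] using congrFun hg (x, ⟨_, hx⟩)
  · exact wdeg_lt_of_coeff_eq_zero hQ fun j i hA => by rw [hcoeff, dif_neg (by rw [hS]; omega)]

lemma lt_sum_of_permissible {n k s ℓ τ : ℕ} (hk : 1 ≤ k)
    (hE : 0 < (ℓ + 1 : ℤ) * s * ((n : ℤ) - τ)
        - ((ℓ + 1).choose 2 : ℤ) * ((k : ℤ) - 1)
        - ((s + 1).choose 2 : ℤ) * n) :
    n * (s + 1).choose 2 < ∑ j ∈ Finset.range (ℓ + 1), (s * (n - τ) - (k - 1) * j) := by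
  generalize hA : s * (n - τ) = A
  have hsA : (s : ℤ) * ((n : ℤ) - τ) ≤ A := by
    rw [← hA]
    push_cast
    exact mul_le_mul_of_nonneg_left (by omega) (Int.natCast_nonneg s)
  have hsum : ∑ j ∈ Finset.range (ℓ + 1), ((A : ℤ) - ((k : ℤ) - 1) * j) ≤
      ∑ j ∈ Finset.range (ℓ + 1), ((A - (k - 1) * j : ℕ) : ℤ) :=
    Finset.sum_le_sum fun j _ => by
      have : (((k - 1) * j : ℕ) : ℤ) = ((k : ℤ) - 1) * j := by push_cast [Nat.cast_sub hk]; ring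
      omega
  have hgauss : ∑ j ∈ Finset.range (ℓ + 1), (j : ℤ) = ((ℓ + 1).choose 2 : ℤ) := by
    rw [← sum_range_id_eq_choose_two, Nat.cast_sum]
  rw [Finset.sum_sub_distrib, Finset.sum_const, Finset.card_range, ← Finset.mul_sum, hgauss,
    nsmul_eq_mul] at hsum
  have hmul := mul_le_mul_of_nonneg_left hsA (by positivity : (0 : ℤ) ≤ ℓ + 1)
  zify
  push_cast at hsum
  linarith

end Interpolation

theorem statement18_general {F : Type*} [Field F] {n k s ℓ τ : ℕ}
    (hk : 1 ≤ k)
    (α : Fin n → F) (r' : Fin n → F)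
    (hE : 0 < (ℓ + 1 : ℤ) * s * ((n : ℤ) - τ)
        - ((ℓ + 1).choose 2 : ℤ) * ((k : ℤ) - 1)
        - ((s + 1).choose 2 : ℤ) * n)
    (B : Matrix (Fin (ℓ + 1)) (Fin (ℓ + 1)) (Polynomial F))
    (hbasis : IsBasisOfInterp α r' s ℓ (fun i => rowToPoly (B i)))
    (hWP : WeakPopov (B * Wmat F k ℓ)) :
    ∃ i, rowToPoly (B i) ≠ 0 ∧ rowToPoly (B i) ∈ InterpSet α r' s ℓ ∧
      wdeg k (rowToPoly (B i)) < s * (n - τ) ∧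
      ∀ Q ∈ InterpSet α r' s ℓ, Q ≠ 0 →
        wdeg k (rowToPoly (B i)) ≤ wdeg k Q := by
  obtain ⟨hindep, hspan⟩ := hbasis
  obtain ⟨i, -, hi⟩ := Finset.exists_min_image Finset.univ
    (fun i => wdeg k (rowToPoly (B i))) Finset.univ_nonempty
  have hmin : ∀ Q ∈ InterpSet α r' s ℓ, Q ≠ 0 → wdeg k (rowToPoly (B i)) ≤ wdeg k Q := by
    intro Q hQ hQ0
    rw [← hspan, SetLike.mem_coe] at hQ
    obtain ⟨j, hj⟩ := exists_wdeg_rowToPoly_le hWP hQ hQ0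
    exact (hi j (Finset.mem_univ j)).trans hj
  obtain ⟨Q, hQ0, hQ, hQA⟩ := exists_mem_interpSet_wdeg_lt α r' (lt_sum_of_permissible hk hE)
  exact ⟨i, hindep.ne_zero i, hspan ▸ Submodule.subset_span ⟨i, rfl⟩,
    (hmin Q hQ hQ0).trans_lt hQA, hmin⟩

/-- If the rows of B form a basis of M_{s,ℓ}, B·W_ℓ is in weak Popov form,
and E(s,ℓ,τ) > 0, then the row of B of minimal (1,k−1)-weighted degree corresponds to a
nonzero polynomial Q ∈ M_{s,ℓ} with weighted degree strictly less than s(n−τ). -/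
theorem statement18 {F : Type*} [Field F] [Fintype F] {n k s ℓ τ : ℕ}
    (hk : 1 ≤ k) (hkn : k ≤ n) (hs : 1 ≤ s) (hsℓ : s ≤ ℓ) (hτ : τ < n)
    (α : Fin n → F) (hα : Function.Injective α) (r' : Fin n → F)
    (hE : 0 < (ℓ + 1 : ℤ) * s * ((n : ℤ) - τ)
        - ((ℓ + 1).choose 2 : ℤ) * ((k : ℤ) - 1)
        - ((s + 1).choose 2 : ℤ) * n)
    (B : Matrix (Fin (ℓ + 1)) (Fin (ℓ + 1)) (Polynomial F)) (hB : B.det ≠ 0)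
    (hbasis : IsBasisOfInterp α r' s ℓ (fun i => rowToPoly (B i)))
    (hWP : WeakPopov (B * Wmat F k ℓ)) :
    ∃ i, rowToPoly (B i) ≠ 0 ∧ rowToPoly (B i) ∈ InterpSet α r' s ℓ ∧
      wdeg k (rowToPoly (B i)) < s * (n - τ) ∧
      ∀ Q ∈ InterpSet α r' s ℓ, Q ≠ 0 →
        wdeg k (rowToPoly (B i)) ≤ wdeg k Q :=
  statement18_general hk α r' hE B hbasis hWP
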